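/- arXiv:1303.5611 — 2 statements merged into one kernel-verified Lean document; each statement's English description precedes it below -/
import Mathlib

section
/- In the Gale duality setup, for every true maximal φ-bunch Θ one has (overline(Θ^♯))^♯ = Θ. -/
open Set

/-- The convex cone generated by a set `S`: all finite nonnegative combinations. -/
def coneHull (k : Type*) [Field k] [LinearOrder k] [IsStrictOrderedRing k] {W : Type*} [AddCommGroup W] [Module k W]
    (S : Set W) : Set W :=
  {x | ∃ (n : ℕ) (c : Fin n → k) (v : Fin n → W),
    (∀ i, 0 ≤ c i) ∧ (∀ i, v i ∈ S) ∧ x = ∑ i, c i • v i}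

/-- The relative interior of a convex cone `C` (algebraic characterization, valid over `ℚ`):
`x` lies in the relative interior iff `x ∈ C` and one can move from `x` a little bit
against any direction of `C` while staying in `C`. -/
def coneRelint (k : Type*) [Field k] [LinearOrder k] [IsStrictOrderedRing k] {W : Type*} [AddCommGroup W] [Module k W]
    (C : Set W) : Set W :=
  {x ∈ C | ∀ y ∈ C, ∃ ε : k, 0 < ε ∧ x - ε • y ∈ C}

/-- `F` is a face of the convex cone `C`. -/
def IsConeFace {W : Type*} [AddCommGroup W] (F C : Set W) : Prop :=
  F ⊆ C ∧ ∀ x ∈ C, ∀ y ∈ C, x + y ∈ F → x ∈ F ∧ y ∈ F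

/-- The set `{e_D : D ∈ I ∪ J}` of standard basis vectors of `E = ℚ^(𝔇 ⊔ ℜ)`. -/
def genSet {𝔇 ℜ : Type*} [DecidableEq 𝔇] [DecidableEq ℜ] (I : Set 𝔇) (J : Set ℜ) :
    Set ((𝔇 ⊕ ℜ) → ℚ) :=
  (fun D : 𝔇 => Pi.single (Sum.inl D) (1 : ℚ)) '' I ∪
    (fun Y : ℜ => Pi.single (Sum.inr Y) (1 : ℚ)) '' J

/-- The Gale duality setup: `ψ : ℚ^(𝔇⊔ℜ) → N` and `φ : ℚ^(𝔇⊔ℜ) → K` are surjective linear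
maps whose kernels are orthogonal complements of each other w.r.t. the standard inner
product, `V ⊆ N` is a cosimplicial cone, each `u_Y = ψ(e_Y)` is a nonzero element of `V`,
the rays `ℚ≥0·u_Y` are pairwise distinct, and the `ψ(e_D)`, `D ∈ 𝔇 ⊔ ℜ`, generate `N`
as a convex cone. -/
structure GaleSetup (𝔇 ℜ N K : Type*) [Fintype 𝔇] [Fintype ℜ]
    [DecidableEq 𝔇] [DecidableEq ℜ]
    [AddCommGroup N] [Module ℚ N] [FiniteDimensional ℚ N]
    [AddCommGroup K] [Module ℚ K] [FiniteDimensional ℚ K] where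
  ψ : ((𝔇 ⊕ ℜ) → ℚ) →ₗ[ℚ] N
  φ : ((𝔇 ⊕ ℜ) → ℚ) →ₗ[ℚ] K
  ψ_surj : Function.Surjective ψ
  φ_surj : Function.Surjective φ
  ker_dual : ∀ x : (𝔇 ⊕ ℜ) → ℚ,
    x ∈ LinearMap.ker φ ↔ ∀ y ∈ LinearMap.ker ψ, ∑ d : 𝔇 ⊕ ℜ, x d * y d = 0
  V : Set N
  cosimplicial : ∃ (s : ℕ) (χ : Fin s → (N →ₗ[ℚ] ℚ)),
    LinearIndependent ℚ χ ∧ V = {v : N | ∀ i, χ i v ≤ 0}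
  u_mem_V : ∀ Y : ℜ, ψ (Pi.single (Sum.inr Y) 1) ∈ V
  u_ne_zero : ∀ Y : ℜ, ψ (Pi.single (Sum.inr Y) 1) ≠ 0
  rays_distinct : ∀ Y Y' : ℜ, Y ≠ Y' →
    coneHull ℚ {ψ (Pi.single (Sum.inr Y) 1)} ≠ coneHull ℚ {ψ (Pi.single (Sum.inr Y') 1)}
  gen_cone_top : coneHull ℚ (Set.range fun d : 𝔇 ⊕ ℜ => ψ (Pi.single d 1)) = Set.univ

namespace GaleSetup

variable {𝔇 ℜ N K : Type*} [Fintype 𝔇] [Fintype ℜ] [DecidableEq 𝔇] [DecidableEq ℜ]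
    [AddCommGroup N] [Module ℚ N] [FiniteDimensional ℚ N]
    [AddCommGroup K] [Module ℚ K] [FiniteDimensional ℚ K]
    (G : GaleSetup 𝔇 ℜ N K)

/-- `ρ(D) = ψ(e_D)` for a color `D ∈ 𝔇`. -/
def ρ (D : 𝔇) : N := G.ψ (Pi.single (Sum.inl D) 1)

/-- The ψ-cone `(cone(ψ({e_D : D ∈ I ∪ J})), I)`. -/
def psiCone (I : Set 𝔇) (J : Set ℜ) : Set N × Set 𝔇 :=
  (coneHull ℚ (G.ψ '' genSet I J), I)

/-- `σ` is a ψ-cone. -/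
def IsPsiCone (σ : Set N × Set 𝔇) : Prop := ∃ I J, σ = G.psiCone I J

/-- A ψ-cone is supported if the relative interior of its cone meets `V`. -/
def PsiSupported (σ : Set N × Set 𝔇) : Prop :=
  (coneRelint ℚ σ.1 ∩ G.V).Nonempty

/-- The φ-cone `cone(φ({e_D : D ∈ I ∪ J}))`. -/
def phiCone (I : Set 𝔇) (J : Set ℜ) : Set K := coneHull ℚ (G.φ '' genSet I J)

/-- `τ` is a φ-cone. -/
def IsPhiCone (τ : Set K) : Prop := ∃ I J, τ = G.phiCone I J

/-- `Σ^♯` for a collection `Σ` of ψ-cones. -/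
def psiSharp (𝒮 : Set (Set N × Set 𝔇)) : Set (Set K) :=
  {τ | ∃ I J, G.psiCone I J ∈ 𝒮 ∧ τ = G.phiCone Iᶜ Jᶜ}

/-- `Θ^♯` for a collection `Θ` of φ-cones. -/
def phiSharp (Θ : Set (Set K)) : Set (Set N × Set 𝔇) :=
  {σ | ∃ I J, G.phiCone I J ∈ Θ ∧ σ = G.psiCone Iᶜ Jᶜ}

/-- A φ-cone is supported if `{τ}^♯` contains a supported ψ-cone. -/
def PhiSupported (τ : Set K) : Prop :=
  ∃ σ ∈ G.phiSharp {τ}, G.PsiSupported σ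

/-- The overline operation: remove all non-supported ψ-cones from a collection. -/
def overline (𝒮 : Set (Set N × Set 𝔇)) : Set (Set N × Set 𝔇) :=
  {σ ∈ 𝒮 | G.PsiSupported σ}

/-- `σ'` is a (colored) face of the ψ-cone `σ`. -/
def IsPsiFace (σ' σ : Set N × Set 𝔇) : Prop :=
  G.IsPsiCone σ' ∧ IsConeFace σ'.1 σ.1 ∧ σ'.2 = σ.2 ∩ {D : 𝔇 | G.ρ D ∈ σ'.1}

/-- A ψ-cone is pointed if its cone is pointed and `0 ∉ ψ({e_D : D ∈ F(σ)})`. -/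
def PsiPointed (σ : Set N × Set 𝔇) : Prop :=
  (∀ x ∈ σ.1, -x ∈ σ.1 → x = 0) ∧ ∀ D ∈ σ.2, G.ρ D ≠ (0 : N)

/-- A ψ-cone is simplicial if its cone is spanned by part of a `ℚ`-basis of `N` containing
`ψ({e_D : D ∈ F(σ)})` and `D ↦ ψ(e_D)` is injective on `F(σ)`. -/
def PsiSimplicial (σ : Set N × Set 𝔇) : Prop :=
  (∃ S : Set N, LinearIndependent ℚ (fun x : S => (x : N)) ∧ (∀ D ∈ σ.2, G.ρ D ∈ S) ∧
    σ.1 = coneHull ℚ S) ∧ Set.InjOn G.ρ σ.2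

/-- A ψ-fan: a nonempty collection of supported pointed ψ-cones, closed under supported
faces, whose members' relative interiors are pairwise disjoint. -/
def IsPsiFan (𝒮 : Set (Set N × Set 𝔇)) : Prop :=
  𝒮.Nonempty ∧
  (∀ σ ∈ 𝒮, G.IsPsiCone σ ∧ G.PsiSupported σ ∧ G.PsiPointed σ) ∧
  (∀ σ ∈ 𝒮, ∀ σ', G.IsPsiFace σ' σ → G.PsiSupported σ' → σ' ∈ 𝒮) ∧
  (∀ v : N, ∀ σ ∈ 𝒮, ∀ σ' ∈ 𝒮,
    v ∈ coneRelint ℚ σ.1 → v ∈ coneRelint ℚ σ'.1 → σ = σ')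

/-- A ψ-fan is true if it contains `(cone(u_Y), ∅)` for every `Y ∈ ℜ` and, in case
`𝔇 ≠ ∅`, also `(0, ∅)`. -/
def IsTruePsiFan (𝒮 : Set (Set N × Set 𝔇)) : Prop :=
  G.IsPsiFan 𝒮 ∧
  (∀ Y : ℜ, (coneHull ℚ {G.ψ (Pi.single (Sum.inr Y) 1)}, (∅ : Set 𝔇)) ∈ 𝒮) ∧
  (Nonempty 𝔇 → (({0} : Set N), (∅ : Set 𝔇)) ∈ 𝒮)

/-- A true maximal ψ-fan: a true ψ-fan that cannot be enlarged while remaining a ψ-fan. -/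
def IsTrueMaxPsiFan (𝒮 : Set (Set N × Set 𝔇)) : Prop :=
  G.IsTruePsiFan 𝒮 ∧ ∀ 𝒮', G.IsPsiFan 𝒮' → 𝒮 ⊆ 𝒮' → 𝒮' = 𝒮

/-- A φ-bunch: a nonempty collection of supported φ-cones, the relative interiors of any
two members intersect, and every supported φ-cone whose relative interior contains the
relative interior of some member belongs to the collection. -/
def IsPhiBunch (Θ : Set (Set K)) : Prop :=
  Θ.Nonempty ∧
  (∀ τ ∈ Θ, G.IsPhiCone τ ∧ G.PhiSupported τ) ∧
  (∀ τ₁ ∈ Θ, ∀ τ₂ ∈ Θ, (coneRelint ℚ τ₁ ∩ coneRelint ℚ τ₂).Nonempty) ∧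
  (∀ τ₁ ∈ Θ, ∀ τ : Set K, G.IsPhiCone τ → G.PhiSupported τ →
    coneRelint ℚ τ₁ ⊆ coneRelint ℚ τ → τ ∈ Θ)

/-- A φ-bunch is true if it contains `cone(φ({e_D : D ∈ 𝔇 ∪ (ℜ∖{Y})}))` for every
`Y ∈ ℜ` and, in case `𝔇 ≠ ∅`, also `cone(φ({e_D : D ∈ 𝔇 ⊔ ℜ}))`. -/
def IsTruePhiBunch (Θ : Set (Set K)) : Prop :=
  G.IsPhiBunch Θ ∧
  (∀ Y : ℜ, G.phiCone Set.univ ({Y}ᶜ) ∈ Θ) ∧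
  (Nonempty 𝔇 → G.phiCone Set.univ Set.univ ∈ Θ)

/-- A true maximal φ-bunch: a true φ-bunch that cannot be enlarged while remaining a
φ-bunch. -/
def IsTrueMaxPhiBunch (Θ : Set (Set K)) : Prop :=
  G.IsTruePhiBunch Θ ∧ ∀ Θ', G.IsPhiBunch Θ' → Θ ⊆ Θ' → Θ' = Θ

/-- A φ-cone has full dimension in `K`. -/
def PhiFullDim (τ : Set K) : Prop :=
  Module.finrank ℚ (Submodule.span ℚ τ) = Module.finrank ℚ K

end GaleSetup


section ConeHelpers

variable {W : Type*} [AddCommGroup W] [Module ℚ W]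

lemma coneHull_zero_mem (S : Set W) : (0 : W) ∈ coneHull ℚ S :=
  ⟨0, (fun i => i.elim0), (fun i => i.elim0), (fun i => i.elim0), (fun i => i.elim0), by simp⟩

lemma coneHull_smul_mem {S : Set W} {w : W} (hw : w ∈ S) {t : ℚ} (ht : 0 ≤ t) :
    t • w ∈ coneHull ℚ S :=
  ⟨1, fun _ => t, fun _ => w, fun _ => ht, fun _ => hw, by simp⟩

lemma coneHull_mem_of_mem {S : Set W} {w : W} (hw : w ∈ S) : w ∈ coneHull ℚ S := by
  have := coneHull_smul_mem (S := S) hw (t := 1) zero_le_one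
  rwa [one_smul] at this

lemma coneHull_add_mem {S : Set W} {x y : W} (hx : x ∈ coneHull ℚ S)
    (hy : y ∈ coneHull ℚ S) : x + y ∈ coneHull ℚ S := by
  obtain ⟨n, c, v, hc, hv, rfl⟩ := hx
  obtain ⟨m, d, u, hd, hu, rfl⟩ := hy
  refine ⟨n + m, Fin.append c d, Fin.append v u, ?_, ?_, ?_⟩
  · intro i
    refine Fin.addCases (fun j => ?_) (fun j => ?_) i
    · simpa [Fin.append_left] using hc j
    · simpa [Fin.append_right] using hd j
  · intro i
    refine Fin.addCases (fun j => ?_) (fun j => ?_) i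
    · simpa [Fin.append_left] using hv j
    · simpa [Fin.append_right] using hu j
  · rw [Fin.sum_univ_add]
    simp [Fin.append_left, Fin.append_right]

section GenSet

variable {𝔇 ℜ : Type*} [Fintype 𝔇] [Fintype ℜ] [DecidableEq 𝔇] [DecidableEq ℜ]

set_option linter.unusedSectionVars false in
/-- Forward representation: an element of the cone generated by `f '' genSet I J` is the
image under `f` of a nonnegative vector supported on `I ⊔ J`. -/
lemma coneHull_image_genSet_repr (f : ((𝔇 ⊕ ℜ) → ℚ) →ₗ[ℚ] W) (I : Set 𝔇) (J : Set ℜ)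
    {x : W} (hx : x ∈ coneHull ℚ (f '' genSet I J)) :
    ∃ c : (𝔇 ⊕ ℜ) → ℚ, (∀ d, 0 ≤ c d) ∧ (∀ D, D ∉ I → c (Sum.inl D) = 0) ∧
      (∀ Y, Y ∉ J → c (Sum.inr Y) = 0) ∧ x = f c := by
  classical
  obtain ⟨n, t, v, ht, hv, rfl⟩ := hx
  have h : ∀ i, ∃ p : 𝔇 ⊕ ℜ,
      (Sum.elim (· ∈ I) (· ∈ J) p) ∧ v i = f (Pi.single p (1:ℚ)) := by
    intro i
    obtain ⟨w, hw, hfw⟩ := hv i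
    rcases hw with ⟨D, hD, rfl⟩ | ⟨Y, hY, rfl⟩
    · exact ⟨Sum.inl D, hD, hfw.symm⟩
    · exact ⟨Sum.inr Y, hY, hfw.symm⟩
  choose p hp hvp using h
  refine ⟨∑ i, t i • (Pi.single (p i) (1:ℚ) : (𝔇 ⊕ ℜ) → ℚ), ?_, ?_, ?_, ?_⟩
  · intro d
    rw [Finset.sum_apply]
    refine Finset.sum_nonneg fun i _ => ?_
    have h1 : (0:ℚ) ≤ (Pi.single (p i) (1:ℚ) : (𝔇 ⊕ ℜ) → ℚ) d := by
      rw [Pi.single_apply]; split <;> norm_num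
    simpa using mul_nonneg (ht i) h1
  · intro D hD
    rw [Finset.sum_apply]
    refine Finset.sum_eq_zero fun i _ => ?_
    have hne : (Sum.inl D : 𝔇 ⊕ ℜ) ≠ p i := by
      intro hEq
      have := hp i
      rw [← hEq] at this
      exact hD this
    simp [Pi.single_apply, hne]
  · intro Y hY
    rw [Finset.sum_apply]
    refine Finset.sum_eq_zero fun i _ => ?_
    have hne : (Sum.inr Y : 𝔇 ⊕ ℜ) ≠ p i := by
      intro hEq
      have := hp i
      rw [← hEq] at this
      exact hY this
    simp [Pi.single_apply, hne]
  · rw [map_sum]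
    refine Finset.sum_congr rfl fun i _ => ?_
    rw [map_smul, ← hvp i]

/-- Relative-interior representation: an element of the relative interior of the cone
generated by `f '' genSet I J` is the image under `f` of a vector strictly positive
exactly on `I ⊔ J`. -/
lemma coneRelint_image_genSet_repr (f : ((𝔇 ⊕ ℜ) → ℚ) →ₗ[ℚ] W) (I : Set 𝔇) (J : Set ℜ)
    {x : W} (hx : x ∈ coneRelint ℚ (coneHull ℚ (f '' genSet I J))) :
    ∃ c : (𝔇 ⊕ ℜ) → ℚ, (∀ D ∈ I, 0 < c (Sum.inl D)) ∧ (∀ D ∉ I, c (Sum.inl D) = 0) ∧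
      (∀ Y ∈ J, 0 < c (Sum.inr Y)) ∧ (∀ Y ∉ J, c (Sum.inr Y) = 0) ∧ x = f c := by
  classical
  obtain ⟨hxC, hrel⟩ := hx
  set ind : (𝔇 ⊕ ℜ) → ℚ := fun d => if Sum.elim (· ∈ I) (· ∈ J) d then 1 else 0 with hind
  have hindmem : f ind ∈ coneHull ℚ (f '' genSet I J) := by
    have h1 : ∀ d : 𝔇 ⊕ ℜ, Pi.single d (ind d) = ind d • (Pi.single d (1:ℚ) : (𝔇 ⊕ ℜ) → ℚ) := by
      intro d
      rw [← Pi.single_smul, smul_eq_mul, mul_one]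
    have h2 : f ind = ∑ d : 𝔇 ⊕ ℜ, ind d • f (Pi.single d 1) := by
      conv_lhs => rw [← Finset.univ_sum_single ind]
      rw [map_sum]
      exact Finset.sum_congr rfl fun d _ => by rw [h1 d, map_smul]
    rw [h2]
    refine Finset.sum_induction _ (· ∈ coneHull ℚ (f '' genSet I J))
      (fun a b ha hb => coneHull_add_mem ha hb) (coneHull_zero_mem _) ?_
    intro d _
    by_cases hd : Sum.elim (· ∈ I) (· ∈ J) d
    · refine coneHull_smul_mem ?_ ?_
      · refine ⟨Pi.single d 1, ?_, rfl⟩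
        rcases d with D | Y
        · exact Or.inl ⟨D, hd, rfl⟩
        · exact Or.inr ⟨Y, hd, rfl⟩
      · rw [hind]; simp only []; split <;> norm_num
    · have h0 : ind d = 0 := by rw [hind]; simp only []; rw [if_neg hd]
      rw [h0, zero_smul]
      exact coneHull_zero_mem _
  obtain ⟨ε, hε, hmem⟩ := hrel (f ind) hindmem
  obtain ⟨c', hc'0, hc'I, hc'J, hc'x⟩ := coneHull_image_genSet_repr f I J hmem
  have hindI : ∀ D : 𝔇, D ∈ I → ind (Sum.inl D) = 1 := fun D hD => by
    rw [hind]; exact if_pos hD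
  have hindI0 : ∀ D : 𝔇, D ∉ I → ind (Sum.inl D) = 0 := fun D hD => by
    rw [hind]; exact if_neg hD
  have hindJ : ∀ Y : ℜ, Y ∈ J → ind (Sum.inr Y) = 1 := fun Y hY => by
    rw [hind]; exact if_pos hY
  have hindJ0 : ∀ Y : ℜ, Y ∉ J → ind (Sum.inr Y) = 0 := fun Y hY => by
    rw [hind]; exact if_neg hY
  refine ⟨c' + ε • ind, ?_, ?_, ?_, ?_, ?_⟩
  · intro D hD
    have := hc'0 (Sum.inl D)
    simp only [Pi.add_apply, Pi.smul_apply, smul_eq_mul, hindI D hD, mul_one]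
    linarith
  · intro D hD
    simp only [Pi.add_apply, Pi.smul_apply, smul_eq_mul, hindI0 D hD, mul_zero,
      hc'I D hD, add_zero]
  · intro Y hY
    have := hc'0 (Sum.inr Y)
    simp only [Pi.add_apply, Pi.smul_apply, smul_eq_mul, hindJ Y hY, mul_one]
    linarith
  · intro Y hY
    simp only [Pi.add_apply, Pi.smul_apply, smul_eq_mul, hindJ0 Y hY, mul_zero,
      hc'J Y hY, add_zero]
  · rw [map_add, map_smul, ← hc'x, sub_add_cancel]

end GenSet

end ConeHelpers

/-- For every true maximal φ-bunch `Θ` one has `(overline(Θ^♯))^♯ = Θ`. -/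
theorem psiSharp_overline_phiSharp {𝔇 ℜ N K : Type*} [Fintype 𝔇] [Fintype ℜ] [DecidableEq 𝔇] [DecidableEq ℜ]
    [AddCommGroup N] [Module ℚ N] [FiniteDimensional ℚ N]
    [AddCommGroup K] [Module ℚ K] [FiniteDimensional ℚ K]
    (G : GaleSetup 𝔇 ℜ N K)
    (Θ : Set (Set K)) (hΘ : G.IsTrueMaxPhiBunch Θ) :
    G.psiSharp (G.overline (G.phiSharp Θ)) = Θ := by
  classical
  obtain ⟨⟨⟨hne, hmemP, hpair, hclose⟩, htrueY, htrueD⟩, hmax⟩ := hΘ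
  ext τ
  simp only [GaleSetup.psiSharp, GaleSetup.overline, GaleSetup.phiSharp,
    Set.mem_setOf_eq, Set.mem_singleton_iff]
  constructor
  · rintro ⟨I, J, ⟨⟨I', J', hmemΘ, hpsi⟩, hsupp⟩, rfl⟩
    have hC : coneHull ℚ (G.ψ '' genSet I J) = coneHull ℚ (G.ψ '' genSet I'ᶜ J'ᶜ) :=
      congrArg Prod.fst hpsi
    have hI : I = I'ᶜ := congrArg Prod.snd hpsi
    -- sign data coming from the intersection of relative interiors of the member
    -- `phiCone I' J'` with the "true" member `phiCone univ {Y}ᶜ`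
    have signdata : ∀ Y : ℜ, ∃ w : (𝔇 ⊕ ℜ) → ℚ,
        (∀ y ∈ LinearMap.ker G.ψ, ∑ d : 𝔇 ⊕ ℜ, w d * y d = 0) ∧
        (∀ D, D ∉ I' → 0 < w (Sum.inl D)) ∧
        (∀ Z, Z ≠ Y → Z ∉ J' → 0 < w (Sum.inr Z)) ∧
        (Y ∈ J' → w (Sum.inr Y) < 0) ∧ (Y ∉ J' → w (Sum.inr Y) = 0) := by
      intro Y
      obtain ⟨x, hx1, hx2⟩ := hpair _ (htrueY Y) _ hmemΘ
      rw [GaleSetup.phiCone] at hx1 hx2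
      obtain ⟨a, haI, haI0, haJ, haJ0, hxa⟩ := coneRelint_image_genSet_repr G.φ _ _ hx1
      obtain ⟨b, hbI, hbI0, hbJ, hbJ0, hxb⟩ := coneRelint_image_genSet_repr G.φ _ _ hx2
      refine ⟨a - b, ?_, ?_, ?_, ?_, ?_⟩
      · have hker : a - b ∈ LinearMap.ker G.φ := by
          rw [LinearMap.mem_ker, map_sub, ← hxa, ← hxb, sub_self]
        exact fun y hy => (G.ker_dual (a - b)).mp hker y hy
      · intro D hD
        have ha := haI D (Set.mem_univ D)
        have hb := hbI0 D hD
        simp only [Pi.sub_apply]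
        linarith
      · intro Z hZ hZ'
        have ha := haJ Z (by simpa using hZ)
        have hb := hbJ0 Z hZ'
        simp only [Pi.sub_apply]
        linarith
      · intro hY
        have ha := haJ0 Y (by simp)
        have hb := hbJ Y hY
        simp only [Pi.sub_apply]
        linarith
      · intro hY
        have ha := haJ0 Y (by simp)
        have hb := hbJ0 Y hY
        simp only [Pi.sub_apply]
        linarith
    -- Step 1: J ⊆ J'ᶜ
    have hQR : J ⊆ J'ᶜ := by
      intro Y hY
      rw [Set.mem_compl_iff]
      by_contra hY'
      obtain ⟨w, hdual, hwD, hwZ, hwYneg, -⟩ := signdata Y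
      have hu : G.ψ (Pi.single (Sum.inr Y) 1) ∈ coneHull ℚ (G.ψ '' genSet I'ᶜ J'ᶜ) := by
        rw [← hC]
        exact coneHull_mem_of_mem ⟨_, Or.inr ⟨Y, hY, rfl⟩, rfl⟩
      obtain ⟨c, hc0, hcI, hcJ, hcψ⟩ := coneHull_image_genSet_repr G.ψ _ _ hu
      have hker : Pi.single (Sum.inr Y) 1 - c ∈ LinearMap.ker G.ψ := by
        rw [LinearMap.mem_ker, map_sub, ← hcψ, sub_self]
      have hsum := hdual _ hker
      have h1 : ∑ d : 𝔇 ⊕ ℜ, w d * (Pi.single (Sum.inr Y) (1:ℚ) : (𝔇 ⊕ ℜ) → ℚ) d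
          = w (Sum.inr Y) := by
        simp [Pi.single_apply, mul_ite]
      have hsum' : w (Sum.inr Y) = ∑ d : 𝔇 ⊕ ℜ, w d * c d := by
        have h2 : ∑ d : 𝔇 ⊕ ℜ, w d * ((Pi.single (Sum.inr Y) (1:ℚ) : (𝔇 ⊕ ℜ) → ℚ) - c) d
            = (∑ d : 𝔇 ⊕ ℜ, w d * (Pi.single (Sum.inr Y) (1:ℚ) : (𝔇 ⊕ ℜ) → ℚ) d)
              - ∑ d : 𝔇 ⊕ ℜ, w d * c d := by
          rw [← Finset.sum_sub_distrib]
          exact Finset.sum_congr rfl fun d _ => by simp [Pi.sub_apply, mul_sub]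
        rw [h2, h1] at hsum
        linarith
      have hterm : ∀ d : 𝔇 ⊕ ℜ, 0 ≤ w d * c d := by
        intro d
        rcases d with D | Z
        · by_cases hD : D ∈ I'
          · rw [hcI D (by simpa using hD), mul_zero]
          · exact mul_nonneg (hwD D hD).le (hc0 _)
        · by_cases hZ : Z ∈ J'
          · rw [hcJ Z (by simpa using hZ), mul_zero]
          · have hZY : Z ≠ Y := fun h => hZ (h ▸ hY')
            exact mul_nonneg (hwZ Z hZY hZ).le (hc0 _)
      have hge : (0:ℚ) ≤ w (Sum.inr Y) := by
        rw [hsum']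
        exact Finset.sum_nonneg fun d _ => hterm d
      exact absurd hge (not_le.mpr (hwYneg hY'))
    -- Step 2: J'ᶜ ⊆ J
    have hRQ : J'ᶜ ⊆ J := by
      intro Y hY
      by_contra hYJ
      have hY' : Y ∉ J' := hY
      obtain ⟨w, hdual, hwD, hwZ, -, hwY0⟩ := signdata Y
      have hu : G.ψ (Pi.single (Sum.inr Y) 1) ∈ coneHull ℚ (G.ψ '' genSet I J) := by
        rw [hC]
        exact coneHull_mem_of_mem ⟨_, Or.inr ⟨Y, hY, rfl⟩, rfl⟩
      obtain ⟨c, hc0, hcI, hcJ, hcψ⟩ := coneHull_image_genSet_repr G.ψ _ _ hu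
      have hker : Pi.single (Sum.inr Y) 1 - c ∈ LinearMap.ker G.ψ := by
        rw [LinearMap.mem_ker, map_sub, ← hcψ, sub_self]
      have hsum := hdual _ hker
      have h1 : ∑ d : 𝔇 ⊕ ℜ, w d * (Pi.single (Sum.inr Y) (1:ℚ) : (𝔇 ⊕ ℜ) → ℚ) d
          = w (Sum.inr Y) := by
        simp [Pi.single_apply, mul_ite]
      have hsum' : w (Sum.inr Y) = ∑ d : 𝔇 ⊕ ℜ, w d * c d := by
        have h2 : ∑ d : 𝔇 ⊕ ℜ, w d * ((Pi.single (Sum.inr Y) (1:ℚ) : (𝔇 ⊕ ℜ) → ℚ) - c) d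
            = (∑ d : 𝔇 ⊕ ℜ, w d * (Pi.single (Sum.inr Y) (1:ℚ) : (𝔇 ⊕ ℜ) → ℚ) d)
              - ∑ d : 𝔇 ⊕ ℜ, w d * c d := by
          rw [← Finset.sum_sub_distrib]
          exact Finset.sum_congr rfl fun d _ => by simp [Pi.sub_apply, mul_sub]
        rw [h2, h1] at hsum
        linarith
      have hwpos : ∀ d : 𝔇 ⊕ ℜ, c d ≠ 0 → 0 < w d := by
        intro d hcd
        rcases d with D | Z
        · by_cases hD : D ∈ I
          · refine hwD D ?_
            rw [hI, Set.mem_compl_iff] at hD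
            exact hD
          · exact absurd (hcI D hD) hcd
        · by_cases hZ : Z ∈ J
          · have h1' : Z ∉ J' := hQR hZ
            have h2' : Z ≠ Y := fun h => hYJ (h ▸ hZ)
            exact hwZ Z h2' h1'
          · exact absurd (hcJ Z hZ) hcd
      have hterm : ∀ d : 𝔇 ⊕ ℜ, 0 ≤ w d * c d := by
        intro d
        by_cases hcd : c d = 0
        · rw [hcd, mul_zero]
        · exact mul_nonneg (hwpos d hcd).le (hc0 d)
      have hzero : ∀ d ∈ Finset.univ, w d * c d = 0 := by
        refine (Finset.sum_eq_zero_iff_of_nonneg fun d _ => hterm d).mp ?_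
        rw [← hsum', hwY0 hY']
      have hc : c = 0 := by
        funext d
        by_cases hcd : c d = 0
        · simpa using hcd
        · have hw := hwpos d hcd
          have := hzero d (Finset.mem_univ d)
          have : c d = 0 := by
            rcases mul_eq_zero.mp this with h | h
            · exact absurd h hw.ne'
            · exact h
          exact absurd this hcd
      exact G.u_ne_zero Y (by rw [hcψ, hc, map_zero])
    have hJ : J = J'ᶜ := hQR.antisymm hRQ
    have heq : G.phiCone Iᶜ Jᶜ = G.phiCone I' J' := by
      rw [hI, hJ, compl_compl, compl_compl]
    rw [heq]
    exact hmemΘ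
  · intro hτ
    obtain ⟨-, hsupp⟩ := hmemP τ hτ
    obtain ⟨σ, hσmem, hσsup⟩ := hsupp
    simp only [GaleSetup.phiSharp, Set.mem_setOf_eq, Set.mem_singleton_iff] at hσmem
    obtain ⟨I', J', hτeq, rfl⟩ := hσmem
    refine ⟨I'ᶜ, J'ᶜ, ⟨⟨I', J', ?_, rfl⟩, hσsup⟩, ?_⟩
    · rw [hτeq]; exact hτ
    · rw [compl_compl, compl_compl, hτeq]
end

section
/- In the Gale duality setup, let I₁, I₂ ⊆ 𝔇 and J₁, J₂ ⊆ ℜ, set δ_k := cone({e_D : D ∈ I_k∪J_k}) ⊆ E and C_k := cone(ψ({e_D : D ∈ I_k∪J_k})) ⊆ N_ℚ for k = 1, 2. Suppose there exists a linear form e on E vanishing on ker ψ such that e ≥ 0 on δ₁, e ≤ 0 on δ₂, and δ₁ ∩ ker e = δ₁ ∩ δ₂ = δ₂ ∩ ker e. Then C₀ := C₁ ∩ C₂ is a face of both cones C₁ and C₂, and the induced colored faces of the ψ-cones (C₁, I₁) and (C₂, I₂) with underlying cone C₀ coincide; in particular I₁ ∩ {D ∈ 𝔇 : ρ(D) ∈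 C₀} = I₂ ∩ {D ∈ 𝔇 : ρ(D) ∈ C₀}. -/
open Set

lemma mem_coneHull_self' {k : Type*} [Field k] [LinearOrder k] [IsStrictOrderedRing k] {W : Type*} [AddCommGroup W]
    [Module k W] {S : Set W} {x : W} (hx : x ∈ S) : x ∈ coneHull k S :=
  ⟨1, fun _ => 1, fun _ => x, fun _ => zero_le_one, fun _ => hx, by simp⟩

lemma coneHull_image' {k : Type*} [Field k] [LinearOrder k] [IsStrictOrderedRing k] {W W' : Type*} [AddCommGroup W]
    [Module k W] [AddCommGroup W'] [Module k W'] (f : W →ₗ[k] W') (S : Set W) :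
    coneHull k (f '' S) = f '' coneHull k S := by
  ext x
  constructor
  · rintro ⟨n, c, v, hc, hv, rfl⟩
    choose w hw hfw using hv
    exact ⟨∑ i, c i • w i, ⟨n, c, w, hc, hw, rfl⟩, by simp [map_sum, hfw]⟩
  · rintro ⟨y, ⟨n, c, v, hc, hv, rfl⟩, rfl⟩
    exact ⟨n, c, fun i => f (v i), hc, fun i => ⟨v i, hv i, rfl⟩, by simp [map_sum]⟩

lemma single_mem_genSet {𝔇 ℜ : Type*} [DecidableEq 𝔇] [DecidableEq ℜ] {I : Set 𝔇}
    {J : Set ℜ} {D : 𝔇} (hD : D ∈ I) :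
    Pi.single (Sum.inl D) (1 : ℚ) ∈ genSet (ℜ := ℜ) I J :=
  Or.inl ⟨D, hD, rfl⟩

lemma mem_of_single_mem_coneHull {𝔇 ℜ : Type*} [DecidableEq 𝔇] [DecidableEq ℜ]
    {I : Set 𝔇} {J : Set ℜ} {D : 𝔇}
    (h : Pi.single (Sum.inl D) (1 : ℚ) ∈ coneHull ℚ (genSet (ℜ := ℜ) I J)) : D ∈ I := by
  obtain ⟨n, c, v, hc, hv, heq⟩ := h
  have h1 : (1 : ℚ) = ∑ i, c i * v i (Sum.inl D) := by
    have := congr_fun heq (Sum.inl D)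
    simpa using this
  have hne : ∃ i ∈ Finset.univ, c i * v i (Sum.inl D) ≠ 0 := by
    by_contra hcon
    push_neg at hcon
    rw [Finset.sum_eq_zero (fun i hi => hcon i hi)] at h1
    exact one_ne_zero h1
  obtain ⟨i, -, hi⟩ := hne
  have hvi : v i (Sum.inl D) ≠ 0 := fun hz => hi (by rw [hz, mul_zero])
  rcases hv i with ⟨D', hD', hvD'⟩ | ⟨Y, hY, hvY⟩
  · have : D' = D := by
      by_contra hne'
      apply hvi
      rw [← hvD']
      simp [Pi.single_apply, Ne.symm hne']
    rwa [← this]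
  · exact absurd (by rw [← hvY]; simp [Pi.single_apply]) hvi

lemma isConeFace_inter_ker {W : Type*} [AddCommGroup W] [Module ℚ W] {C : Set W}
    (f : W →ₗ[ℚ] ℚ) (hf : ∀ x ∈ C, 0 ≤ f x) :
    IsConeFace (C ∩ {x | f x = 0}) C := by
  refine ⟨Set.inter_subset_left, fun x hx y hy hxy => ?_⟩
  have hsum : f x + f y = 0 := by have := hxy.2; simpa [map_add] using this
  have hx0 : f x = 0 := le_antisymm (by linarith [hf y hy]) (hf x hx)
  have hy0 : f y = 0 := by linarith
  exact ⟨⟨hx, hx0⟩, ⟨hy, hy0⟩⟩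

/-- If the cones `δ₁, δ₂ ⊆ E` spanned by `{e_D : D ∈ Iₖ ∪ Jₖ}` admit a separating linear
form vanishing on `ker ψ`, then `C₀ = C₁ ∩ C₂` is a face of both cones `C₁, C₂ ⊆ N`, and
the induced colored faces of the ψ-cones `(C₁, I₁)` and `(C₂, I₂)` coincide. -/
theorem separating_form_gives_common_face {𝔇 ℜ N K : Type*} [Fintype 𝔇] [Fintype ℜ] [DecidableEq 𝔇] [DecidableEq ℜ]
    [AddCommGroup N] [Module ℚ N] [FiniteDimensional ℚ N]
    [AddCommGroup K] [Module ℚ K] [FiniteDimensional ℚ K]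
    (G : GaleSetup 𝔇 ℜ N K)
    (I₁ I₂ : Set 𝔇) (J₁ J₂ : Set ℜ)
    (h : ∃ e : ((𝔇 ⊕ ℜ) → ℚ) →ₗ[ℚ] ℚ,
      (∀ x ∈ LinearMap.ker G.ψ, e x = 0) ∧
      (∀ x ∈ coneHull ℚ (genSet I₁ J₁), 0 ≤ e x) ∧
      (∀ x ∈ coneHull ℚ (genSet I₂ J₂), e x ≤ 0) ∧
      coneHull ℚ (genSet I₁ J₁) ∩ {x | e x = 0} =
        coneHull ℚ (genSet I₁ J₁) ∩ coneHull ℚ (genSet I₂ J₂) ∧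
      coneHull ℚ (genSet I₂ J₂) ∩ {x | e x = 0} =
        coneHull ℚ (genSet I₁ J₁) ∩ coneHull ℚ (genSet I₂ J₂)) :
    IsConeFace (coneHull ℚ (G.ψ '' genSet I₁ J₁) ∩ coneHull ℚ (G.ψ '' genSet I₂ J₂))
        (coneHull ℚ (G.ψ '' genSet I₁ J₁)) ∧
    IsConeFace (coneHull ℚ (G.ψ '' genSet I₁ J₁) ∩ coneHull ℚ (G.ψ '' genSet I₂ J₂))
        (coneHull ℚ (G.ψ '' genSet I₂ J₂)) ∧
    I₁ ∩ {D : 𝔇 | G.ρ D ∈ coneHull ℚ (G.ψ '' genSet I₁ J₁) ∩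
        coneHull ℚ (G.ψ '' genSet I₂ J₂)} =
      I₂ ∩ {D : 𝔇 | G.ρ D ∈ coneHull ℚ (G.ψ '' genSet I₁ J₁) ∩
        coneHull ℚ (G.ψ '' genSet I₂ J₂)} := by
  obtain ⟨e, hker, hpos, hneg, hA, hB⟩ := h
  obtain ⟨g, hg⟩ := G.ψ.exists_rightInverse_of_surjective
    (LinearMap.range_eq_top.mpr G.ψ_surj)
  set f : N →ₗ[ℚ] ℚ := e ∘ₗ g with hf
  have hfψ : ∀ x, f (G.ψ x) = e x := by
    intro x
    have hker' : g (G.ψ x) - x ∈ LinearMap.ker G.ψ := by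
      rw [LinearMap.mem_ker, map_sub, sub_eq_zero]
      exact DFunLike.congr_fun hg (G.ψ x)
    have := hker _ hker'
    rw [map_sub] at this
    have : e (g (G.ψ x)) = e x := by linarith
    simpa [hf] using this
  have hC1 : coneHull ℚ (G.ψ '' genSet I₁ J₁) = G.ψ '' coneHull ℚ (genSet I₁ J₁) :=
    coneHull_image' G.ψ _
  have hC2 : coneHull ℚ (G.ψ '' genSet I₂ J₂) = G.ψ '' coneHull ℚ (genSet I₂ J₂) :=
    coneHull_image' G.ψ _
  have hf1 : ∀ x ∈ coneHull ℚ (G.ψ '' genSet I₁ J₁), 0 ≤ f x := by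
    rw [hC1]; rintro x ⟨a, ha, rfl⟩; rw [hfψ]; exact hpos a ha
  have hf2 : ∀ x ∈ coneHull ℚ (G.ψ '' genSet I₂ J₂), f x ≤ 0 := by
    rw [hC2]; rintro x ⟨a, ha, rfl⟩; rw [hfψ]; exact hneg a ha
  have hkey1 : coneHull ℚ (G.ψ '' genSet I₁ J₁) ∩ coneHull ℚ (G.ψ '' genSet I₂ J₂) =
      coneHull ℚ (G.ψ '' genSet I₁ J₁) ∩ {x | f x = 0} := by
    ext x
    constructor
    · rintro ⟨h1, h2⟩
      exact ⟨h1, le_antisymm (hf2 x h2) (hf1 x h1)⟩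
    · rintro ⟨h1, h2⟩
      refine ⟨h1, ?_⟩
      rw [hC1] at h1
      obtain ⟨a, ha, rfl⟩ := h1
      have hea : e a = 0 := by rw [← hfψ]; exact h2
      have : a ∈ coneHull ℚ (genSet I₁ J₁) ∩ coneHull ℚ (genSet I₂ J₂) := by
        rw [← hA]; exact ⟨ha, hea⟩
      rw [hC2]
      exact ⟨a, this.2, rfl⟩
  have hkey2 : coneHull ℚ (G.ψ '' genSet I₁ J₁) ∩ coneHull ℚ (G.ψ '' genSet I₂ J₂) =
      coneHull ℚ (G.ψ '' genSet I₂ J₂) ∩ {x | f x = 0} := by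
    ext x
    constructor
    · rintro ⟨h1, h2⟩
      exact ⟨h2, le_antisymm (hf2 x h2) (hf1 x h1)⟩
    · rintro ⟨h2, hfx⟩
      refine ⟨?_, h2⟩
      rw [hC2] at h2
      obtain ⟨a, ha, rfl⟩ := h2
      have hea : e a = 0 := by rw [← hfψ]; exact hfx
      have : a ∈ coneHull ℚ (genSet I₁ J₁) ∩ coneHull ℚ (genSet I₂ J₂) := by
        rw [← hB]; exact ⟨ha, hea⟩
      rw [hC1]
      exact ⟨a, this.1, rfl⟩
  refine ⟨hkey1 ▸ isConeFace_inter_ker f hf1, ?_, ?_⟩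
  · have := isConeFace_inter_ker (-f) (fun x hx => by simpa using hf2 x hx)
    have h' : (coneHull ℚ (G.ψ '' genSet I₂ J₂) ∩ {x | (-f) x = 0}) =
        coneHull ℚ (G.ψ '' genSet I₁ J₁) ∩ coneHull ℚ (G.ψ '' genSet I₂ J₂) := by
      rw [hkey2]
      ext x
      simp [neg_eq_zero]
    rw [h'] at this
    exact this
  · ext D
    simp only [Set.mem_inter_iff, Set.mem_setOf_eq]
    constructor
    · rintro ⟨hD, hρ1, hρ2⟩
      refine ⟨?_, hρ1, hρ2⟩
      have hfρ : f (G.ρ D) = 0 := by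
        have hm : G.ρ D ∈ coneHull ℚ (G.ψ '' genSet I₁ J₁) ∩ {x | f x = 0} := by
          rw [← hkey1]; exact ⟨hρ1, hρ2⟩
        exact hm.2
      have heD : e (Pi.single (Sum.inl D) 1) = 0 := by
        rw [← hfψ]; exact hfρ
      have hmem : Pi.single (Sum.inl D) (1 : ℚ) ∈
          coneHull ℚ (genSet I₁ J₁) ∩ coneHull ℚ (genSet I₂ J₂) := by
        rw [← hA]
        exact ⟨mem_coneHull_self' (single_mem_genSet hD), heD⟩
      exact mem_of_single_mem_coneHull hmem.2
    · rintro ⟨hD, hρ1, hρ2⟩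
      refine ⟨?_, hρ1, hρ2⟩
      have hfρ : f (G.ρ D) = 0 := by
        have hm : G.ρ D ∈ coneHull ℚ (G.ψ '' genSet I₁ J₁) ∩ {x | f x = 0} := by
          rw [← hkey1]; exact ⟨hρ1, hρ2⟩
        exact hm.2
      have heD : e (Pi.single (Sum.inl D) 1) = 0 := by
        rw [← hfψ]; exact hfρ
      have hmem : Pi.single (Sum.inl D) (1 : ℚ) ∈
          coneHull ℚ (genSet I₁ J₁) ∩ coneHull ℚ (genSet I₂ J₂) := by
        rw [← hB]
        exact ⟨mem_coneHull_self' (single_mem_genSet hD), heD⟩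
      exact mem_of_single_mem_coneHull hmem.1
end
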